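/- Let A be a left brace such that A^s = 0 for some natural number s (left nilpotency). For a, b ∈ A define inductively d_0 = a, d_0' = b, and d_{i+1} = d_i + d_i', d_{i+1}' = d_i * d_i' for all i ≥ 0. Then for every c ∈ A, (a+b)*c = a*c + b*c + Σ_{i=0}^{2s} (−1)^{i+1} ( (d_i * d_i') * c − d_i * (d_i' * c) ). -/
import Mathlib


/-- A left brace: `(A,+)` abelian group, `(A,∘)` a group, with
`a ∘ (b + c) + a = a ∘ b + a ∘ c`. -/
structure LeftBrace (A : Type) [AddCommGroup A] where
  circ : A → A → A
  one : A
  inv : A → A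
  circ_assoc : ∀ a b c, circ (circ a b) c = circ a (circ b c)
  one_circ : ∀ a, circ one a = a
  circ_one : ∀ a, circ a one = a
  inv_circ : ∀ a, circ (inv a) a = one
  circ_add : ∀ a b c, circ a (b + c) + a = circ a b + circ a c

namespace LeftBrace

variable {A : Type} [AddCommGroup A]

/-- `a * b = a ∘ b - a - b`. -/
def star (B : LeftBrace A) (a b : A) : A := B.circ a b - a - b

/-- `lchain B n = Aⁿ` for `n ≥ 1` (and `lchain B 0 = ⊤`): `A¹ = A`, and
`Aⁿ⁺¹` is the additive subgroup generated by `{a * b : a ∈ A, b ∈ Aⁿ}`. -/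
def lchain (B : LeftBrace A) : ℕ → AddSubgroup A
  | 0 => ⊤
  | 1 => ⊤
  | n + 2 => AddSubgroup.closure {x | ∃ a : A, ∃ b ∈ B.lchain (n + 1), x = B.star a b}

/-- `rchain B n = A⁽ⁿ⁾` for `n ≥ 1`: `A⁽¹⁾ = A`, and `A⁽ⁿ⁺¹⁾` is the additive
subgroup generated by `{a * b : a ∈ A⁽ⁿ⁾, b ∈ A}`. -/
def rchain (B : LeftBrace A) : ℕ → AddSubgroup A
  | 0 => ⊤
  | 1 => ⊤
  | n + 2 => AddSubgroup.closure {x | ∃ a ∈ B.rchain (n + 1), ∃ b : A, x = B.star a b}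

/-- `schain B n = A^[n]` for `n ≥ 1`:  `A^[1] = A`, and
`A^[i+1] = Σ_{j=1}^{i} A^[j] * A^[i+1-j]` (additive subgroup generated by the
corresponding products). -/
def schain (B : LeftBrace A) : ℕ → AddSubgroup A
  | 0 => ⊤
  | 1 => ⊤
  | n + 2 => AddSubgroup.closure
      {x | ∃ j : Fin (n + 1), ∃ u ∈ B.schain (j.1 + 1), ∃ v ∈ B.schain (n + 1 - j.1),
        x = B.star u v}

/-- An ideal of a left brace: an additive subgroup, normal in `(A,∘)`, and
invariant under all maps `λ_a(x) = a * x + x`. -/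
structure IsIdeal (B : LeftBrace A) (I : AddSubgroup A) : Prop where
  lam_mem : ∀ a : A, ∀ x ∈ I, B.star a x + x ∈ I
  conj_mem : ∀ a : A, ∀ x ∈ I, B.circ (B.circ a x) (B.inv a) ∈ I

/-- Left chain of an ideal: `ichainL B I n = Iⁿ⁺¹`, where `I¹ = I` and `Iⁱ⁺¹`
is the additive subgroup generated by `{a * b : a ∈ I, b ∈ Iⁱ}`. -/
def ichainL (B : LeftBrace A) (I : AddSubgroup A) : ℕ → AddSubgroup A
  | 0 => I
  | n + 1 => AddSubgroup.closure {x | ∃ a ∈ I, ∃ b ∈ B.ichainL I n, x = B.star a b}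

/-- Right chain of an ideal: `ichainR B I n = I⁽ⁿ⁺¹⁾`, where `I⁽¹⁾ = I` and
`I⁽ⁱ⁺¹⁾` is the additive subgroup generated by `{a * b : a ∈ I⁽ⁱ⁾, b ∈ I}`. -/
def ichainR (B : LeftBrace A) (I : AddSubgroup A) : ℕ → AddSubgroup A
  | 0 => I
  | n + 1 => AddSubgroup.closure {x | ∃ a ∈ B.ichainR I n, ∃ b ∈ I, x = B.star a b}

end LeftBrace

namespace LeftBrace

variable {A : Type} [AddCommGroup A]

/-- The sequence `(d_i, d_i')`: `d_0 = a`, `d_0' = b`, `d_{i+1} = d_i + d_i'`,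
`d_{i+1}' = d_i * d_i'`. -/
def dSeq (B : LeftBrace A) (a b : A) : ℕ → A × A
  | 0 => (a, b)
  | i + 1 => ((B.dSeq a b i).1 + (B.dSeq a b i).2, B.star (B.dSeq a b i).1 (B.dSeq a b i).2)

end LeftBrace

namespace LeftBrace

variable {A : Type} [AddCommGroup A]

variable (B : LeftBrace A)

lemma circ_add' (a x y : A) : B.circ a (x + y) = B.circ a x + B.circ a y - a :=
  eq_sub_of_add_eq (B.circ_add a x y)

lemma circ_zero (a : A) : B.circ a 0 = a := by
  have h := B.circ_add' a 0 0
  rw [add_zero] at h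
  have h' : B.circ a 0 + a = B.circ a 0 + B.circ a 0 := by nth_rewrite 1 [h]; abel
  exact (add_left_cancel h').symm

lemma one_eq_zero : B.one = 0 := by
  have h1 := B.circ_zero B.one
  have h2 := B.one_circ 0
  rw [h2] at h1; exact h1.symm

lemma zero_circ (c : A) : B.circ 0 c = c := by
  have := B.one_circ c
  rwa [B.one_eq_zero] at this

lemma star_zero_left (c : A) : B.star 0 c = 0 := by
  simp [star, B.zero_circ]

lemma circ_neg (a x : A) : B.circ a (-x) = a + a - B.circ a x := by
  have h := B.circ_add' a x (-x)
  rw [add_neg_cancel, B.circ_zero] at h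
  have : B.circ a (-x) - (a + a - B.circ a x) = 0 := by
    nth_rewrite 2 [h]; abel
  exact sub_eq_zero.mp this

lemma circ_star (x y c : A) :
    B.star (B.circ x y) c = B.star x c + B.star y c + B.star x (B.star y c) := by
  have key : B.circ x (B.circ y c - y - c)
      = B.circ x (B.circ y c) - B.circ x y - B.circ x c + (x + x) := by
    rw [sub_sub, sub_eq_add_neg, B.circ_add', neg_add, B.circ_add', B.circ_neg, B.circ_neg]
    abel
  simp only [star]
  rw [B.circ_assoc, key]
  abel

end LeftBrace

namespace LeftBrace

variable {A : Type} [AddCommGroup A] (B : LeftBrace A)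

lemma lchain_succ_le (n : ℕ) : B.lchain (n+1) ≤ B.lchain n := by
  induction n with
  | zero => exact le_top
  | succ m ih =>
    match m with
    | 0 => exact le_top
    | k+1 =>
      show B.lchain (k+1+2) ≤ B.lchain (k+2)
      rw [lchain]
      refine (AddSubgroup.closure_le _).mpr ?_
      rintro x ⟨a, b, hb, rfl⟩
      have hb' : b ∈ B.lchain (k+1) := ih hb
      exact AddSubgroup.subset_closure ⟨a, b, hb', rfl⟩

lemma lchain_add_le (n k : ℕ) : B.lchain (n + k) ≤ B.lchain n := by
  induction k with
  | zero => exact le_rfl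
  | succ m ih => exact le_trans (B.lchain_succ_le (n + m)) ih

lemma dseq_snd_mem (a b : A) : ∀ i, (B.dSeq a b i).2 ∈ B.lchain (i+1)
  | 0 => AddSubgroup.mem_top b
  | i+1 => by
    show B.star (B.dSeq a b i).1 (B.dSeq a b i).2 ∈ B.lchain (i+2)
    rw [lchain]
    exact AddSubgroup.subset_closure ⟨_, _, dseq_snd_mem a b i, rfl⟩

lemma main_ind (a b c : A) (n : ℕ) :
    B.star (a+b) c = B.star a c + B.star b c
      + ∑ i ∈ Finset.range n, (-1:ℤ)^(i+1) •
          (B.star (B.star (B.dSeq a b i).1 (B.dSeq a b i).2) c -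
            B.star (B.dSeq a b i).1 (B.star (B.dSeq a b i).2 c))
      + (-1:ℤ)^n • (B.star ((B.dSeq a b n).1 + (B.dSeq a b n).2) c
          - B.star (B.dSeq a b n).1 c - B.star (B.dSeq a b n).2 c) := by
  induction n with
  | zero => simp [dSeq]
  | succ n ih =>
    rw [Finset.sum_range_succ]
    set d := (B.dSeq a b n).1 with hd
    set d' := (B.dSeq a b n).2 with hd'
    have h1 : (B.dSeq a b (n+1)).1 = d + d' := rfl
    have h2 : (B.dSeq a b (n+1)).2 = B.star d d' := rfl
    rw [h1, h2]
    have hcirc : d + d' + B.star d d' = B.circ d d' := by simp [star]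
    have hL := B.circ_star d d' c
    have hF : B.star (d + d' + B.star d d') c
        = -(B.star (d+d') c - B.star d c - B.star d' c)
          - (B.star (B.star d d') c - B.star d (B.star d' c))
          + B.star (d+d') c + B.star (B.star d d') c := by
      rw [hcirc, hL]; abel
    have key : (-1:ℤ)^n • (B.star (d+d') c - B.star d c - B.star d' c)
        = (-1:ℤ)^(n+1) • (B.star (B.star d d') c - B.star d (B.star d' c))
        + (-1:ℤ)^(n+1) • (B.star (d + d' + B.star d d') c
            - B.star (d+d') c - B.star (B.star d d') c) := by
      rw [hF, pow_succ]
      module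
    rw [ih, key]
    abel

end LeftBrace


/-- if `A` is a left brace with `A^s = 0`, then for all `a, b, c`,
`(a+b)*c = a*c + b*c + Σ_{i=0}^{2s} (-1)^{i+1}((d_i * d_i') * c - d_i * (d_i' * c))`. -/
theorem leftBrace_add_star_formula {A : Type} [AddCommGroup A] (B : LeftBrace A)
    (s : ℕ) (hs : B.lchain s = ⊥) (a b : A) :
    ∀ c : A,
      B.star (a + b) c =
        B.star a c + B.star b c +
          ∑ i ∈ Finset.range (2 * s + 1), (-1 : ℤ) ^ (i + 1) •
            (B.star (B.star (B.dSeq a b i).1 (B.dSeq a b i).2) c -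
              B.star (B.dSeq a b i).1 (B.star (B.dSeq a b i).2 c)) := by
  intro c
  rw [B.main_ind a b c (2*s+1)]
  have hd : (B.dSeq a b (2*s+1)).2 = 0 := by
    have hm := B.dseq_snd_mem a b (2*s+1)
    have hle : B.lchain (2*s+1+1) ≤ B.lchain s := by
      have he : 2*s+1+1 = s + (s+2) := by ring
      rw [he]; exact B.lchain_add_le s (s+2)
    rw [hs] at hle
    exact (AddSubgroup.mem_bot).mp (hle hm)
  rw [hd]
  simp [B.star_zero_left]
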